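/- For a compact Hausdorff space X and an open subset U ⊆ X, one has I(X \ U) = I(X) \ S_I(U); consequently S_I(U) is open in I(X). -/

import Mathlib

open scoped BigOperators

/-- An idempotent probability measure: normality on constants, max-plus homogeneity
(addition of constants), and max-additivity (pointwise max ↦ max). -/
def IsIdemProb {X : Type*} [TopologicalSpace X] (μ : C(X, ℝ) → ℝ) : Prop :=
  (∀ c : ℝ, μ (ContinuousMap.const X c) = c) ∧
  (∀ (c : ℝ) (φ : C(X, ℝ)), μ (ContinuousMap.const X c + φ) = c + μ φ) ∧
  (∀ φ ψ : C(X, ℝ), μ (φ ⊔ ψ) = max (μ φ) (μ ψ))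

/-- The support of a functional μ : the intersection of all closed sets F such that
μ φ depends only on φ|_F. -/
def suppI {X : Type*} [TopologicalSpace X] (μ : C(X, ℝ) → ℝ) : Set X :=
  ⋂₀ {F : Set X | IsClosed F ∧ ∀ φ ψ : C(X, ℝ), (∀ x ∈ F, φ x = ψ x) → μ φ = μ ψ}

/-- The space I(X) of idempotent probability measures with the topology of
pointwise convergence. -/
abbrev IPM (X : Type*) [TopologicalSpace X] : Type _ :=
  {μ : C(X, ℝ) → ℝ // IsIdemProb μ}

/-- S_I(A) = {μ ∈ I(X) : supp μ ∩ A ≠ ∅}. -/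
def SI {X : Type*} [TopologicalSpace X] (A : Set X) : Set (IPM X) :=
  {μ | (suppI μ.1 ∩ A).Nonempty}

/-!
Say that `μ` *depends only on* `F` if `μ φ = μ ψ` whenever `φ = ψ` on `F`. By Tietze gluing,
finite intersections of closed such sets again qualify. The key point is that an idempotent
probability measure depends only on its support: given `φ = ψ` on `supp μ` and `ε > 0`,
compactness of `{|φ - ψ| ≥ ε}` yields a set `G` on which `μ` depends and where `|φ - ψ| < ε`;
clamping `φ` into `[ψ - ε, ψ + ε]` does not change it on `G`, and `μ` is `1`-Lipschitz for the
sup norm, so `|μ φ - μ ψ| ≤ ε`. Hence, for `U` open, `supp μ ⊆ Uᶜ` iff `μ` depends only on `Uᶜ`,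
which exhibits `S_I(U)` as the union of the open sets `{ν | ν φ ≠ ν ψ}` over pairs `φ = ψ`
on `Uᶜ`.
-/

open Set

section DependsOnlyOn

variable {X : Type*} [TopologicalSpace X]

def DependsOnlyOn (μ : C(X, ℝ) → ℝ) (F : Set X) : Prop :=
  ∀ φ ψ : C(X, ℝ), (∀ x ∈ F, φ x = ψ x) → μ φ = μ ψ

theorem DependsOnlyOn.mono {μ : C(X, ℝ) → ℝ} {F G : Set X} (h : DependsOnlyOn μ F)
    (hFG : F ⊆ G) : DependsOnlyOn μ G :=
  fun φ ψ hφψ => h φ ψ fun x hx => hφψ x (hFG hx)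

theorem dependsOnlyOn_univ (μ : C(X, ℝ) → ℝ) : DependsOnlyOn μ univ :=
  fun _ _ h => congrArg μ (ContinuousMap.ext fun x => h x (mem_univ x))

theorem ContinuousMap.exists_eqOn_eqOn_of_isClosed [NormalSpace X] {F₁ F₂ : Set X}
    (h₁ : IsClosed F₁) (h₂ : IsClosed F₂) (φ ψ : C(X, ℝ)) (h : EqOn φ ψ (F₁ ∩ F₂)) :
    ∃ χ : C(X, ℝ), EqOn χ φ F₁ ∧ EqOn χ ψ F₂ := by
  classical
  set f : X → ℝ := F₁.piecewise φ ψ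
  have hf₁ : EqOn f φ F₁ := fun x hx => piecewise_eq_of_mem _ _ _ hx
  have hf₂ : EqOn f ψ F₂ := fun x hx => by
    by_cases hx₁ : x ∈ F₁
    · exact (hf₁ hx₁).trans (h ⟨hx₁, hx⟩)
    · exact piecewise_eq_of_notMem _ _ _ hx₁
  have hf : ContinuousOn f (F₁ ∪ F₂) :=
    (φ.continuous.continuousOn.congr hf₁).union_of_isClosed
      (ψ.continuous.continuousOn.congr hf₂) h₁ h₂
  obtain ⟨χ, hχ⟩ := ContinuousMap.exists_restrict_eq (h₁.union h₂)
    ⟨(F₁ ∪ F₂).domRestrict f, hf.domRestrict⟩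
  have hχf : EqOn χ f (F₁ ∪ F₂) := fun x hx => congrArg (· ⟨x, hx⟩) hχ
  exact ⟨χ, fun x hx => (hχf (Or.inl hx)).trans (hf₁ hx),
    fun x hx => (hχf (Or.inr hx)).trans (hf₂ hx)⟩

theorem DependsOnlyOn.inter [NormalSpace X] {μ : C(X, ℝ) → ℝ} {F₁ F₂ : Set X}
    (h₁ : IsClosed F₁) (h₂ : IsClosed F₂) (d₁ : DependsOnlyOn μ F₁) (d₂ : DependsOnlyOn μ F₂) :
    DependsOnlyOn μ (F₁ ∩ F₂) := by
  intro φ ψ h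
  obtain ⟨χ, hχ₁, hχ₂⟩ := ContinuousMap.exists_eqOn_eqOn_of_isClosed h₁ h₂ φ ψ h
  calc μ φ = μ χ := d₁ φ χ fun x hx => (hχ₁ hx).symm
    _ = μ ψ := d₂ χ ψ fun x hx => hχ₂ hx

theorem dependsOnlyOn_biInter_finset [NormalSpace X] {μ : C(X, ℝ) → ℝ} {ι : Type*}
    {F : ι → Set X} (u : Finset ι) (hc : ∀ i ∈ u, IsClosed (F i))
    (hd : ∀ i ∈ u, DependsOnlyOn μ (F i)) : DependsOnlyOn μ (⋂ i ∈ u, F i) := by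
  classical
  induction u using Finset.induction_on with
  | empty => simpa using dependsOnlyOn_univ μ
  | insert a u _ ih =>
    rw [Finset.set_biInter_insert]
    simp only [Finset.mem_insert, forall_eq_or_imp] at hc hd
    exact hd.1.inter hc.1 (isClosed_biInter hc.2) (ih hc.2 hd.2)

theorem exists_dependsOnlyOn_disjoint_of_disjoint_suppI [NormalSpace X] {μ : C(X, ℝ) → ℝ}
    {K : Set X} (hK : IsCompact K) (hKμ : Disjoint K (suppI μ)) :
    ∃ G, DependsOnlyOn μ G ∧ Disjoint K G := by
  have hsupp : suppI μ = ⋂ F : {F : Set X // IsClosed F ∧ DependsOnlyOn μ F}, F.1 :=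
    sInter_eq_iInter
  rw [hsupp, disjoint_iff_inter_eq_empty] at hKμ
  obtain ⟨u, hu⟩ := hK.elim_finite_subfamily_closed _ (fun F => F.2.1) hKμ
  exact ⟨_, dependsOnlyOn_biInter_finset u (fun F _ => F.2.1) (fun F _ => F.2.2),
    disjoint_iff_inter_eq_empty.2 hu⟩

end DependsOnlyOn

namespace IsIdemProb

variable {X : Type*} [TopologicalSpace X] {μ : C(X, ℝ) → ℝ}

theorem monotone (hμ : IsIdemProb μ) : Monotone μ := by
  intro φ ψ h
  have hmax := hμ.2.2 φ ψ
  rw [sup_eq_right.2 h] at hmax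
  exact hmax ▸ le_max_left _ _

theorem abs_sub_le_of_forall_abs_sub_le (hμ : IsIdemProb μ) {φ ψ : C(X, ℝ)} {ε : ℝ}
    (h : ∀ x, |φ x - ψ x| ≤ ε) : |μ φ - μ ψ| ≤ ε := by
  have hle : φ ≤ ContinuousMap.const X ε + ψ := ContinuousMap.le_def.2 fun x => by
    have := (abs_le.1 (h x)).2
    simp only [ContinuousMap.add_apply, ContinuousMap.const_apply]
    linarith
  have hge : ContinuousMap.const X (-ε) + ψ ≤ φ := ContinuousMap.le_def.2 fun x => by
    have := (abs_le.1 (h x)).1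
    simp only [ContinuousMap.add_apply, ContinuousMap.const_apply]
    linarith
  have hup := hμ.monotone hle
  have hlow := hμ.monotone hge
  rw [hμ.2.1] at hup hlow
  exact abs_le.2 ⟨by linarith, by linarith⟩

end IsIdemProb

theorem ContinuousMap.exists_abs_sub_le_eq_of_abs_sub_le {X : Type*} [TopologicalSpace X]
    (φ ψ : C(X, ℝ)) {ε : ℝ} (hε : 0 ≤ ε) :
    ∃ χ : C(X, ℝ), (∀ x, |χ x - ψ x| ≤ ε) ∧ ∀ x, |φ x - ψ x| ≤ ε → χ x = φ x := by
  refine ⟨ψ + ((φ - ψ) ⊔ ContinuousMap.const X (-ε)) ⊓ ContinuousMap.const X ε, fun x => ?_,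
    fun x hx => ?_⟩
  · simp only [ContinuousMap.add_apply, ContinuousMap.inf_apply, ContinuousMap.sup_apply,
      ContinuousMap.sub_apply, ContinuousMap.const_apply, add_sub_cancel_left]
    exact abs_le.2 ⟨le_min (le_max_right _ _) (by linarith), min_le_right _ _⟩
  · obtain ⟨hlow, hup⟩ := abs_le.1 hx
    simp only [ContinuousMap.add_apply, ContinuousMap.inf_apply, ContinuousMap.sup_apply,
      ContinuousMap.sub_apply, ContinuousMap.const_apply, max_eq_left hlow, min_eq_left hup]
    ring

section CompactHausdorff

variable {X : Type*} [TopologicalSpace X] [CompactSpace X] [T2Space X] {μ : C(X, ℝ) → ℝ}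

theorem IsIdemProb.dependsOnlyOn_suppI (hμ : IsIdemProb μ) : DependsOnlyOn μ (suppI μ) := by
  intro φ ψ h
  refine eq_of_forall_dist_le fun ε hε => ?_
  set K := {x | ε ≤ |φ x - ψ x|}
  have hK : IsCompact K :=
    (isClosed_le continuous_const (φ.continuous.sub ψ.continuous).abs).isCompact
  have hKμ : Disjoint K (suppI μ) := disjoint_left.2 fun x hxK hx => by
    simp only [K, mem_ofPred_eq, h x hx, sub_self, abs_zero] at hxK
    linarith
  obtain ⟨G, hG, hKG⟩ := exists_dependsOnlyOn_disjoint_of_disjoint_suppI hK hKμ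
  obtain ⟨χ, hχψ, hχφ⟩ := φ.exists_abs_sub_le_eq_of_abs_sub_le ψ hε.le
  have hφχ : μ φ = μ χ := hG φ χ fun x hx =>
    (hχφ x (not_le.1 fun hxK => disjoint_left.1 hKG hxK hx).le).symm
  rw [Real.dist_eq, hφχ]
  exact hμ.abs_sub_le_of_forall_abs_sub_le hχψ

theorem IsIdemProb.suppI_subset_iff (hμ : IsIdemProb μ) {F : Set X} (hF : IsClosed F) :
    suppI μ ⊆ F ↔ DependsOnlyOn μ F :=
  ⟨hμ.dependsOnlyOn_suppI.mono, fun h => sInter_subset_of_mem ⟨hF, h⟩⟩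

end CompactHausdorff

theorem I_compl_eq_and_SI_open {X : Type*} [TopologicalSpace X] [CompactSpace X] [T2Space X]
    (U : Set X) (hU : IsOpen U) :
    {μ : IPM X | suppI μ.1 ⊆ Uᶜ} = (SI U)ᶜ ∧ IsOpen (SI U) := by
  have hcompl : {μ : IPM X | suppI μ.1 ⊆ Uᶜ} = (SI U)ᶜ := by
    ext μ
    simp [SI, subset_compl_iff_disjoint_right, disjoint_iff_inter_eq_empty,
      not_nonempty_iff_eq_empty]
  refine ⟨hcompl, ?_⟩
  have hSI : SI U = ⋃ (φ : C(X, ℝ)) (ψ : C(X, ℝ)) (_ : ∀ x ∈ Uᶜ, φ x = ψ x),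
      {μ : IPM X | μ.1 φ ≠ μ.1 ψ} := by
    rw [← compl_compl (SI U), ← hcompl]
    ext μ
    simp [μ.2.suppI_subset_iff hU.isClosed_compl, DependsOnlyOn]
  rw [hSI]
  exact isOpen_iUnion fun φ => isOpen_iUnion fun ψ => isOpen_iUnion fun _ =>
    isOpen_ne_fun ((continuous_apply φ).comp continuous_subtype_val)
      ((continuous_apply ψ).comp continuous_subtype_val)
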